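/- arXiv:2207.07440 — 3 statements merged into one kernel-verified Lean document; each statement's English description precedes it below -/
import Mathlib

section
/- Let a : ℝ^d → [0,∞) be measurable with ∫ |x|^l a(x) dx =: ā_l < ∞ for all l = 0, 1, …, d+1, and let θ : ℝ^d → [0,∞) satisfy θ(x) ≤ c·ψ(x) for all x, where ψ(x) = 1/(1+|x|^{d+1}). Then the convolution (a * θ)(x) = ∫ a(x-y) θ(y) dy satisfies (a * θ)(x) ≤ c ψ(x) [ā_0 + Σ_{l=0}^{d+1} C(d+1, l) ā_l] for all x ∈ ℝ^d. -/
open MeasureTheory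

noncomputable section

/-- `ψ(x) = 1/(1+|x|^{d+1})` on `ℝ^d`. -/
def psi (d : ℕ) (x : EuclideanSpace ℝ (Fin d)) : ℝ := 1 / (1 + ‖x‖ ^ (d + 1))

lemma psi_pos (d : ℕ) (x : EuclideanSpace ℝ (Fin d)) : 0 < psi d x := by
  unfold psi; positivity

lemma psi_key (d : ℕ) (x y : EuclideanSpace ℝ (Fin d)) :
    psi d y ≤ psi d x *
      (1 + ∑ l ∈ Finset.range (d + 2), ((d + 1).choose l : ℝ) * ‖x - y‖ ^ l) := by
  set A := ‖x - y‖ with hA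
  set B := ‖y‖ with hB
  have hA0 : 0 ≤ A := norm_nonneg _
  have hB0 : 0 ≤ B := norm_nonneg _
  set S := ∑ l ∈ Finset.range (d + 2), ((d + 1).choose l : ℝ) * A ^ l with hS
  have hS0 : 0 ≤ S := by
    apply Finset.sum_nonneg
    intro l _
    positivity
  have hx : ‖x‖ ≤ A + B := by
    calc ‖x‖ = ‖(x - y) + y‖ := by rw [sub_add_cancel]
    _ ≤ A + B := norm_add_le _ _
  have h1 : ‖x‖ ^ (d + 1) ≤ (A + B) ^ (d + 1) :=
    pow_le_pow_left₀ (norm_nonneg x) hx _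
  have h2 : (A + B) ^ (d + 1) ≤ (1 + B ^ (d + 1)) * S := by
    rw [add_pow, hS, Finset.mul_sum]
    apply Finset.sum_le_sum
    intro k hk
    have hBk : B ^ (d + 1 - k) ≤ 1 + B ^ (d + 1) := by
      rcases le_total B 1 with h | h
      · have : B ^ (d + 1 - k) ≤ 1 := pow_le_one₀ hB0 h
        nlinarith [pow_nonneg hB0 (d + 1)]
      · have : B ^ (d + 1 - k) ≤ B ^ (d + 1) :=
          pow_le_pow_right₀ h (Nat.sub_le _ _)
        linarith
    have hAk : (0:ℝ) ≤ A ^ k * ((d + 1).choose k : ℝ) := by positivity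
    calc A ^ k * B ^ (d + 1 - k) * ((d + 1).choose k : ℝ)
        = B ^ (d + 1 - k) * (A ^ k * ((d + 1).choose k : ℝ)) := by ring
      _ ≤ (1 + B ^ (d + 1)) * (A ^ k * ((d + 1).choose k : ℝ)) :=
          mul_le_mul_of_nonneg_right hBk hAk
      _ = (1 + B ^ (d + 1)) * (((d + 1).choose k : ℝ) * A ^ k) := by ring
  have hmain : 1 + ‖x‖ ^ (d + 1) ≤ (1 + B ^ (d + 1)) * (1 + S) := by
    have hBpow : 0 ≤ B ^ (d + 1) := pow_nonneg hB0 _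
    nlinarith
  have hpx : (0:ℝ) < 1 + ‖x‖ ^ (d + 1) := by positivity
  have hpy : (0:ℝ) < 1 + B ^ (d + 1) := by positivity
  unfold psi
  rw [div_mul_eq_mul_div, one_mul, div_le_div_iff₀ hpy hpx, one_mul]
  nlinarith
  done

theorem stmt2 (d : ℕ) (hd : 1 ≤ d) (a θ : EuclideanSpace ℝ (Fin d) → ℝ)
    (ha : Measurable a) (ha0 : ∀ x, 0 ≤ a x)
    (hθm : Measurable θ) (hθ0 : ∀ x, 0 ≤ θ x)
    (abar : ℕ → ℝ)
    (hint : ∀ l ≤ d + 1, Integrable (fun x => ‖x‖ ^ l * a x))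
    (habar : ∀ l ≤ d + 1, abar l = ∫ x, ‖x‖ ^ l * a x)
    (c : ℝ) (hc : 0 < c) (hθ : ∀ x, θ x ≤ c * psi d x)
    (x : EuclideanSpace ℝ (Fin d)) :
    ∫ y, a (x - y) * θ y ≤
      c * psi d x *
        (abar 0 + ∑ l ∈ Finset.range (d + 2), ((d + 1).choose l : ℝ) * abar l) := by
  set S : EuclideanSpace ℝ (Fin d) → ℝ :=
    fun z => a z + ∑ l ∈ Finset.range (d + 2), ((d + 1).choose l : ℝ) * (‖z‖ ^ l * a z)
    with hSdef
  have hint0 : Integrable a := by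
    have := hint 0 (by omega)
    simpa using this
  have hSint : Integrable S := by
    apply hint0.add
    apply integrable_finset_sum
    intro l hl
    exact (hint l (by simpa using Nat.lt_succ_iff.mp (Finset.mem_range.mp hl))).const_mul _
  have hSI : ∫ z, S z = abar 0 + ∑ l ∈ Finset.range (d + 2), ((d + 1).choose l : ℝ) * abar l := by
    rw [hSdef]
    rw [integral_add hint0 (integrable_finset_sum _ fun l hl =>
      (hint l (by simpa using Nat.lt_succ_iff.mp (Finset.mem_range.mp hl))).const_mul _)]
    congr 1
    · rw [habar 0 (by omega)]
      simp
    · rw [integral_finset_sum _ fun l hl =>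
        (hint l (by simpa using Nat.lt_succ_iff.mp (Finset.mem_range.mp hl))).const_mul _]
      apply Finset.sum_congr rfl
      intro l hl
      rw [integral_const_mul, habar l (by simpa using Nat.lt_succ_iff.mp (Finset.mem_range.mp hl))]
  have hSc : Integrable (fun y => S (x - y)) := hSint.comp_sub_left x
  have hSIc : ∫ y, S (x - y) = abar 0 + ∑ l ∈ Finset.range (d + 2), ((d + 1).choose l : ℝ) * abar l := by
    rw [integral_sub_left_eq_self S volume x, hSI]
  have hpt : ∀ y, a (x - y) * θ y ≤ c * psi d x * S (x - y) := by
    intro y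
    have hkey := psi_key d x y
    have hθy : θ y ≤ c * psi d x *
        (1 + ∑ l ∈ Finset.range (d + 2), ((d + 1).choose l : ℝ) * ‖x - y‖ ^ l) := by
      calc θ y ≤ c * psi d y := hθ y
        _ ≤ c * (psi d x * (1 + ∑ l ∈ Finset.range (d + 2), ((d + 1).choose l : ℝ) * ‖x - y‖ ^ l)) :=
            mul_le_mul_of_nonneg_left hkey hc.le
        _ = _ := by ring
    have hSxy : S (x - y) = a (x - y) *
        (1 + ∑ l ∈ Finset.range (d + 2), ((d + 1).choose l : ℝ) * ‖x - y‖ ^ l) := by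
      simp only [hSdef, mul_add, mul_one, Finset.mul_sum]
      congr 1
      exact Finset.sum_congr rfl fun l _ => by ring
    rw [hSxy]
    calc a (x - y) * θ y
        ≤ a (x - y) * (c * psi d x *
            (1 + ∑ l ∈ Finset.range (d + 2), ((d + 1).choose l : ℝ) * ‖x - y‖ ^ l)) :=
          mul_le_mul_of_nonneg_left hθy (ha0 _)
      _ = c * psi d x * (a (x - y) *
            (1 + ∑ l ∈ Finset.range (d + 2), ((d + 1).choose l : ℝ) * ‖x - y‖ ^ l)) := by ring
  calc ∫ y, a (x - y) * θ y
      ≤ ∫ y, c * psi d x * S (x - y) := by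
        apply integral_mono_of_nonneg
        · exact Filter.Eventually.of_forall fun y => mul_nonneg (ha0 _) (hθ0 _)
        · exact hSc.const_mul _
        · exact Filter.Eventually.of_forall hpt
    _ = c * psi d x * ∫ y, S (x - y) := integral_const_mul _ _
    _ = _ := by rw [hSIc]
end
end

section
/- Let a : ℝ^d → [0,∞) have finite moments ā_l = ∫ |x|^l a(x) dx for l = 0,…,d+1, let ψ(x) = 1/(1+|x|^{d+1}), and let τ ≥ 0. Then for every x ∈ ℝ^d, ∫ a(x-y) |e^{-τψ(y)} - e^{-τψ(x)}| dy ≤ τ · c_a · ψ(x), where c_a = 1 + ā_0 + Σ_{l=0}^{d+1} C(d+1,l) ā_l. -/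
open MeasureTheory

noncomputable section

lemma psi_mul_pow_le (d k : ℕ) (hk : k ≤ d + 1) (z : EuclideanSpace ℝ (Fin d)) :
    psi d z * ‖z‖ ^ k ≤ 1 := by
  unfold psi
  rw [div_mul_eq_mul_div, div_le_one (by positivity), one_mul]
  rcases le_total ‖z‖ 1 with h | h
  · have h1 : ‖z‖ ^ k ≤ 1 := pow_le_one₀ (norm_nonneg z) h
    nlinarith [pow_nonneg (norm_nonneg z) (d + 1)]
  · have h1 : ‖z‖ ^ k ≤ ‖z‖ ^ (d + 1) := pow_le_pow_right₀ h hk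
    linarith

lemma exp_abs_le (s t : ℝ) (hs : 0 ≤ s) (ht : 0 ≤ t) :
    |Real.exp (-s) - Real.exp (-t)| ≤ |s - t| := by
  wlog h : t ≤ s generalizing s t
  · rw [abs_sub_comm, abs_sub_comm s t]; exact this t s ht hs (le_of_not_ge h)
  have h1 : Real.exp (-t) ≤ 1 := Real.exp_le_one_iff.2 (by linarith)
  have h2 : (t - s) + 1 ≤ Real.exp (t - s) := Real.add_one_le_exp _
  have h3 : Real.exp (-s) = Real.exp (-t) * Real.exp (t - s) := by
    rw [← Real.exp_add]; ring_nf
  have h4 : Real.exp (-s) ≤ Real.exp (-t) := Real.exp_le_exp.2 (by linarith)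
  rw [abs_of_nonpos (by linarith), abs_of_nonneg (by linarith)]
  nlinarith [Real.exp_pos (-t)]

lemma key (d : ℕ) (τ : ℝ) (hτ : 0 ≤ τ) (x y : EuclideanSpace ℝ (Fin d)) :
    |Real.exp (-τ * psi d y) - Real.exp (-τ * psi d x)| ≤
      τ * psi d x * (1 + ∑ l ∈ Finset.range (d + 2), ((d + 1).choose l : ℝ) * ‖x - y‖ ^ l) := by
  have hpy := psi_pos d y
  have hpx := psi_pos d x
  have hsum0 : (0:ℝ) ≤ ∑ l ∈ Finset.range (d + 2), ((d + 1).choose l : ℝ) * ‖x - y‖ ^ l :=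
    Finset.sum_nonneg fun l _ => by positivity
  have h1 : |Real.exp (-τ * psi d y) - Real.exp (-τ * psi d x)| ≤ |τ * psi d y - τ * psi d x| := by
    have := exp_abs_le (τ * psi d y) (τ * psi d x) (by positivity) (by positivity)
    simpa [neg_mul] using this
  have h2 : τ * psi d y - τ * psi d x
      = τ * (psi d x * (psi d y * (‖x‖ ^ (d+1) - ‖y‖ ^ (d+1)))) := by
    unfold psi
    have hx : (0:ℝ) < 1 + ‖x‖ ^ (d+1) := by positivity
    have hy : (0:ℝ) < 1 + ‖y‖ ^ (d+1) := by positivity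
    field_simp
    ring
  have h2' : |τ * psi d y - τ * psi d x|
      = τ * psi d x * (psi d y * |‖x‖ ^ (d+1) - ‖y‖ ^ (d+1)|) := by
    rw [h2, abs_mul, abs_mul, abs_mul, abs_of_nonneg hτ, abs_of_nonneg hpx.le,
      abs_of_nonneg hpy.le]
    ring
  have h3 : psi d y * |‖x‖ ^ (d+1) - ‖y‖ ^ (d+1)| ≤
      1 + ∑ l ∈ Finset.range (d + 2), ((d + 1).choose l : ℝ) * ‖x - y‖ ^ l := by
    rcases le_total ‖x‖ ‖y‖ with h | h
    · have hp : ‖x‖ ^ (d+1) ≤ ‖y‖ ^ (d+1) := pow_le_pow_left₀ (norm_nonneg x) h _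
      rw [abs_of_nonpos (by linarith)]
      have hb : psi d y * ‖y‖ ^ (d+1) ≤ 1 := psi_mul_pow_le d (d+1) le_rfl y
      have hb2 : 0 ≤ psi d y * ‖x‖ ^ (d+1) := by positivity
      nlinarith
    · have hp : ‖y‖ ^ (d+1) ≤ ‖x‖ ^ (d+1) := pow_le_pow_left₀ (norm_nonneg y) h _
      rw [abs_of_nonneg (by linarith)]
      have hxy : ‖x‖ ≤ ‖x - y‖ + ‖y‖ := by
        have := norm_sub_norm_le x y
        linarith
      have hpow : ‖x‖ ^ (d+1) ≤ (‖x - y‖ + ‖y‖) ^ (d+1) :=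
        pow_le_pow_left₀ (norm_nonneg x) hxy _
      rw [add_pow] at hpow
      have hmain : psi d y * ‖x‖ ^ (d+1) ≤
          ∑ l ∈ Finset.range (d + 2), ((d + 1).choose l : ℝ) * ‖x - y‖ ^ l := by
        calc psi d y * ‖x‖ ^ (d+1)
            ≤ psi d y * ∑ l ∈ Finset.range (d + 2),
                ‖x - y‖ ^ l * ‖y‖ ^ (d + 1 - l) * ((d+1).choose l : ℝ) :=
              mul_le_mul_of_nonneg_left hpow hpy.le
          _ = ∑ l ∈ Finset.range (d + 2),
                (((d+1).choose l : ℝ) * ‖x - y‖ ^ l) * (psi d y * ‖y‖ ^ (d + 1 - l)) := by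
              rw [Finset.mul_sum]
              exact Finset.sum_congr rfl fun l _ => by ring
          _ ≤ ∑ l ∈ Finset.range (d + 2), (((d+1).choose l : ℝ) * ‖x - y‖ ^ l) * 1 := by
              refine Finset.sum_le_sum fun l hl => ?_
              exact mul_le_mul_of_nonneg_left
                (psi_mul_pow_le d (d + 1 - l) (by omega) y) (by positivity)
          _ = ∑ l ∈ Finset.range (d + 2), ((d + 1).choose l : ℝ) * ‖x - y‖ ^ l := by
              simp
      have hb2 : 0 ≤ psi d y * ‖y‖ ^ (d+1) := by positivity
      nlinarith
  calc |Real.exp (-τ * psi d y) - Real.exp (-τ * psi d x)|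
      ≤ |τ * psi d y - τ * psi d x| := h1
    _ = τ * psi d x * (psi d y * |‖x‖ ^ (d+1) - ‖y‖ ^ (d+1)|) := h2'
    _ ≤ τ * psi d x * (1 + ∑ l ∈ Finset.range (d + 2), ((d + 1).choose l : ℝ) * ‖x - y‖ ^ l) :=
      mul_le_mul_of_nonneg_left h3 (by positivity)

theorem stmt3 (d : ℕ) (hd : 1 ≤ d) (a : EuclideanSpace ℝ (Fin d) → ℝ)
    (ha : Measurable a) (ha0 : ∀ x, 0 ≤ a x)
    (abar : ℕ → ℝ)
    (hint : ∀ l ≤ d + 1, Integrable (fun x => ‖x‖ ^ l * a x))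
    (habar : ∀ l ≤ d + 1, abar l = ∫ x, ‖x‖ ^ l * a x)
    (τ : ℝ) (hτ : 0 ≤ τ) (x : EuclideanSpace ℝ (Fin d)) :
    ∫ y, a (x - y) * |Real.exp (-τ * psi d y) - Real.exp (-τ * psi d x)| ≤
      τ * (1 + abar 0 + ∑ l ∈ Finset.range (d + 2), ((d + 1).choose l : ℝ) * abar l) *
        psi d x := by
  have hpx := psi_pos d x
  have hI : ∀ l, l ≤ d + 1 → Integrable (fun y => ‖x - y‖ ^ l * a (x - y)) volume :=
    fun l hl => (hint l hl).comp_sub_left x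
  have hI0 : Integrable (fun y => a (x - y)) volume := by
    simpa using hI 0 (by omega)
  have hIsum : Integrable (fun y => ∑ l ∈ Finset.range (d + 2),
      ((d + 1).choose l : ℝ) * (‖x - y‖ ^ l * a (x - y))) volume :=
    integrable_finset_sum _ fun l hl =>
      ((hI l (by simpa using Nat.lt_succ_iff.mp (Finset.mem_range.mp hl))).const_mul _)
  have hB : Integrable (fun y => a (x - y) + ∑ l ∈ Finset.range (d + 2),
      ((d + 1).choose l : ℝ) * (‖x - y‖ ^ l * a (x - y))) volume := hI0.add hIsum
  have habar_nonneg : ∀ l, l ≤ d + 1 → 0 ≤ abar l := by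
    intro l hl
    rw [habar l hl]
    exact integral_nonneg fun z => mul_nonneg (by positivity) (ha0 z)
  have hmono : ∀ y, a (x - y) * |Real.exp (-τ * psi d y) - Real.exp (-τ * psi d x)| ≤
      τ * psi d x * (a (x - y) + ∑ l ∈ Finset.range (d + 2),
        ((d + 1).choose l : ℝ) * (‖x - y‖ ^ l * a (x - y))) := by
    intro y
    have h := mul_le_mul_of_nonneg_left (key d τ hτ x y) (ha0 (x - y))
    have hST : a (x - y) * ∑ l ∈ Finset.range (d + 2), ((d + 1).choose l : ℝ) * ‖x - y‖ ^ l
        = ∑ l ∈ Finset.range (d + 2), ((d + 1).choose l : ℝ) * (‖x - y‖ ^ l * a (x - y)) := by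
      rw [Finset.mul_sum]
      exact Finset.sum_congr rfl fun l _ => by ring
    calc a (x - y) * |Real.exp (-τ * psi d y) - Real.exp (-τ * psi d x)|
        ≤ a (x - y) * (τ * psi d x *
            (1 + ∑ l ∈ Finset.range (d + 2), ((d + 1).choose l : ℝ) * ‖x - y‖ ^ l)) := h
      _ = τ * psi d x * (a (x - y) + ∑ l ∈ Finset.range (d + 2),
            ((d + 1).choose l : ℝ) * (‖x - y‖ ^ l * a (x - y))) := by
          rw [← hST]; ring
  calc ∫ y, a (x - y) * |Real.exp (-τ * psi d y) - Real.exp (-τ * psi d x)|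
      ≤ ∫ y, τ * psi d x * (a (x - y) + ∑ l ∈ Finset.range (d + 2),
          ((d + 1).choose l : ℝ) * (‖x - y‖ ^ l * a (x - y))) :=
        integral_mono_of_nonneg
          (Filter.Eventually.of_forall fun y => mul_nonneg (ha0 _) (abs_nonneg _))
          (hB.const_mul _) (Filter.Eventually.of_forall hmono)
    _ = τ * psi d x * ∫ y, (a (x - y) + ∑ l ∈ Finset.range (d + 2),
          ((d + 1).choose l : ℝ) * (‖x - y‖ ^ l * a (x - y))) := integral_const_mul _ _
    _ = τ * psi d x *
          (abar 0 + ∑ l ∈ Finset.range (d + 2), ((d + 1).choose l : ℝ) * abar l) := by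
        congr 1
        rw [integral_add hI0 hIsum, integral_finset_sum _ fun l hl =>
          ((hI l (by simpa using Nat.lt_succ_iff.mp (Finset.mem_range.mp hl))).const_mul _)]
        congr 1
        · rw [habar 0 (by omega)]
          calc ∫ y, a (x - y) = ∫ z, a z := integral_sub_left_eq_self a volume x
            _ = ∫ z, ‖z‖ ^ 0 * a z := by simp
        · refine Finset.sum_congr rfl fun l hl => ?_
          have hl' : l ≤ d + 1 := by simpa using Nat.lt_succ_iff.mp (Finset.mem_range.mp hl)
          rw [integral_const_mul,
            integral_sub_left_eq_self (fun z => ‖z‖ ^ l * a z) volume x, ← habar l hl']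
    _ ≤ τ * (1 + abar 0 + ∑ l ∈ Finset.range (d + 2), ((d + 1).choose l : ℝ) * abar l) *
          psi d x := by
        have h0 := habar_nonneg 0 (by omega)
        have hs : 0 ≤ ∑ l ∈ Finset.range (d + 2), ((d + 1).choose l : ℝ) * abar l :=
          Finset.sum_nonneg fun l hl => mul_nonneg (by positivity)
            (habar_nonneg l (by simpa using Nat.lt_succ_iff.mp (Finset.mem_range.mp hl)))
        nlinarith [mul_nonneg hτ hpx.le]
end
end

section
/- Let N : Ω → ℕ₀ be a random variable on a probability space (Ω, μ) whose l-th factorial moments satisfy E[N(N-1)⋯(N-l+1)] ≤ κ^l for all l ∈ ℕ and some κ > 0. Then for every β > 0, E[e^{βN}] ≤ exp(κ(e^β - 1)). -/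
/-!
Write `e^{βN} = (1 + t)^N` with `t = e^β - 1 ≥ 0`. The binomial theorem expands this as the
nonnegative series `∑ₗ N(N-1)⋯(N-l+1) tˡ / l!`, so it may be integrated term by term, and the
factorial moment bounds dominate the result by `∑ₗ (κ t)ˡ / l! = exp (κ t)`.
-/

open MeasureTheory Nat

theorem hasSum_descFactorial_mul_pow_div_factorial {𝕜 : Type*} [Field 𝕜] [CharZero 𝕜]
    [TopologicalSpace 𝕜] (n : ℕ) (x : 𝕜) :
    HasSum (fun l => (n.descFactorial l : 𝕜) * x ^ l / l !) ((1 + x) ^ n) := by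
  have hvanish : ∀ l ∉ Finset.range (n + 1), (n.descFactorial l : 𝕜) * x ^ l / l ! = 0 := by
    intro l hl
    rw [Finset.mem_range, not_lt, Nat.succ_le_iff, ← Nat.descFactorial_eq_zero_iff_lt] at hl
    simp [hl]
  have hbinom :
      (1 + x) ^ n = ∑ l ∈ Finset.range (n + 1), (n.descFactorial l : 𝕜) * x ^ l / l ! := by
    rw [add_comm, add_pow]
    refine Finset.sum_congr rfl fun l _ => ?_
    have : (l ! : 𝕜) ≠ 0 := Nat.cast_ne_zero.2 l.factorial_ne_zero
    rw [Nat.descFactorial_eq_factorial_mul_choose, one_pow, mul_one, Nat.cast_mul]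
    field_simp
  rw [hbinom]
  exact hasSum_sum_of_ne_finset_zero hvanish

section FactorialMoments

variable {Ω : Type*} [MeasurableSpace Ω] {μ : Measure Ω} {N : Ω → ℕ}

theorem hasSum_integral_descFactorial_mul_pow_div_factorial {t : ℝ} (ht : 0 ≤ t)
    (hint : ∀ l : ℕ, Integrable (fun ω => ((N ω).descFactorial l : ℝ)) μ)
    (hsum : Summable fun l => (∫ ω, ((N ω).descFactorial l : ℝ) ∂μ) * t ^ l / l !) :
    HasSum (fun l => (∫ ω, ((N ω).descFactorial l : ℝ) ∂μ) * t ^ l / l !)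
      (∫ ω, (1 + t) ^ N ω ∂μ) := by
  have hterm_int : ∀ l : ℕ,
      Integrable (fun ω => ((N ω).descFactorial l : ℝ) * t ^ l / l !) μ :=
    fun l => ((hint l).mul_const _).div_const _
  have hterm : ∀ l : ℕ, ∫ ω, ((N ω).descFactorial l : ℝ) * t ^ l / l ! ∂μ
      = (∫ ω, ((N ω).descFactorial l : ℝ) ∂μ) * t ^ l / l ! := fun l => by
    rw [integral_div, integral_mul_const]
  have hnorm : ∀ l : ℕ, ∫ ω, ‖((N ω).descFactorial l : ℝ) * t ^ l / (l ! : ℝ)‖ ∂μ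
      = (∫ ω, ((N ω).descFactorial l : ℝ) ∂μ) * t ^ l / l ! := fun l => by
    rw [← hterm]
    exact integral_congr_ae (ae_of_all _ fun ω => Real.norm_of_nonneg (by positivity))
  have := hasSum_integral_of_summable_integral_norm hterm_int (by simpa only [hnorm] using hsum)
  simpa only [hterm, (hasSum_descFactorial_mul_pow_div_factorial _ t).tsum_eq] using this

theorem integral_one_add_pow_le_exp_of_descFactorial_moment_le [IsProbabilityMeasure μ]
    {κ t : ℝ} (ht : 0 ≤ t)
    (hint : ∀ l : ℕ, Integrable (fun ω => ((N ω).descFactorial l : ℝ)) μ)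
    (hfm : ∀ l : ℕ, 1 ≤ l → ∫ ω, ((N ω).descFactorial l : ℝ) ∂μ ≤ κ ^ l) :
    ∫ ω, (1 + t) ^ N ω ∂μ ≤ Real.exp (κ * t) := by
  have hmoment : ∀ l : ℕ, ∫ ω, ((N ω).descFactorial l : ℝ) ∂μ ≤ κ ^ l := by
    rintro (_ | l)
    · simp
    · exact hfm _ l.succ_pos
  have hnonneg : ∀ l : ℕ, 0 ≤ (∫ ω, ((N ω).descFactorial l : ℝ) ∂μ) * t ^ l / l ! := fun l => by
    have : 0 ≤ ∫ ω, ((N ω).descFactorial l : ℝ) ∂μ := integral_nonneg fun ω => Nat.cast_nonneg _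
    positivity
  have hle : ∀ l : ℕ,
      (∫ ω, ((N ω).descFactorial l : ℝ) ∂μ) * t ^ l / l ! ≤ (κ * t) ^ l / l ! := fun l => by
    rw [mul_pow]
    gcongr
    exact hmoment l
  have hexp : HasSum (fun l => (κ * t) ^ l / l !) (Real.exp (κ * t)) := by
    rw [Real.exp_eq_exp_ℝ]
    exact NormedSpace.expSeries_div_hasSum_exp (κ * t)
  have hsum := Summable.of_nonneg_of_le hnonneg hle hexp.summable
  exact hasSum_le hle (hasSum_integral_descFactorial_mul_pow_div_factorial ht hint hsum) hexp

end FactorialMoments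

theorem stmt7_general {Ω : Type*} [MeasurableSpace Ω] (μ : Measure Ω) [IsProbabilityMeasure μ]
    (N : Ω → ℕ) (κ : ℝ)
    (hint : ∀ l : ℕ, Integrable (fun ω => ((N ω).descFactorial l : ℝ)) μ)
    (hfm : ∀ l : ℕ, 1 ≤ l → ∫ ω, ((N ω).descFactorial l : ℝ) ∂μ ≤ κ ^ l)
    (β : ℝ) (hβ : 0 < β) :
    ∫ ω, Real.exp (β * N ω) ∂μ ≤ Real.exp (κ * (Real.exp β - 1)) := by
  have hexp_eq : ∀ n : ℕ, Real.exp (β * n) = (1 + (Real.exp β - 1)) ^ n := fun n => by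
    rw [add_sub_cancel, mul_comm, Real.exp_nat_mul]
  have ht : 0 ≤ Real.exp β - 1 := sub_nonneg.2 (Real.one_le_exp hβ.le)
  simpa only [hexp_eq] using integral_one_add_pow_le_exp_of_descFactorial_moment_le ht hint hfm

theorem stmt7 {Ω : Type*} [MeasurableSpace Ω] (μ : Measure Ω) [IsProbabilityMeasure μ]
    (N : Ω → ℕ) (hmeas : Measurable N) (κ : ℝ) (hκ : 0 < κ)
    (hint : ∀ l : ℕ, Integrable (fun ω => ((N ω).descFactorial l : ℝ)) μ)
    (hfm : ∀ l : ℕ, 1 ≤ l → ∫ ω, ((N ω).descFactorial l : ℝ) ∂μ ≤ κ ^ l)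
    (β : ℝ) (hβ : 0 < β)
    (hexp : Integrable (fun ω => Real.exp (β * N ω)) μ) :
    ∫ ω, Real.exp (β * N ω) ∂μ ≤ Real.exp (κ * (Real.exp β - 1)) :=
  stmt7_general μ N κ hint hfm β hβ
end
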